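/- Let β, γ ∈ ℤ^{m|n} both be antidominant, and assume their content-difference functions agree: β_0(y) − β_1(y) = γ_0(y) − γ_1(y) for all y ∈ ℤ. If moreover φ_x(γ) ≥ φ_x(β) and ε_x(γ) ≥ ε_x(β) for all x ∈ ℤ, then γ = β. (This is the combinatorial core of Lemma 4.4: two antidominant weights with the same central character whose primitive ideals are comparable must be equal.) -/

import Mathlib

/-- A symbol of an `i`-signature: `+`, `-`, or `0`. -/
inductive Sign : Type
  | plus : Sign
  | minus : Sign
  | zero : Sign
  deriving DecidableEq, Repr

/-- If the list starts with `0* +`, replace that `+` by `0` (else `none`). -/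
def eatPlus : List Sign → Option (List Sign)
  | [] => none
  | Sign.plus :: rest => some (Sign.zero :: rest)
  | Sign.zero :: rest => (eatPlus rest).map (Sign.zero :: ·)
  | Sign.minus :: _ => none

/-- Cancel the leftmost pattern `- 0* +` (replacing both symbols by `0`), if any. -/
def cancelOne : List Sign → Option (List Sign)
  | [] => none
  | Sign.minus :: rest =>
    match eatPlus rest with
    | some rest' => some (Sign.zero :: rest')
    | none => (cancelOne rest).map (Sign.minus :: ·)
  | s :: rest => (cancelOne rest).map (s :: ·)

/-- Iterate cancellation at most `k` times. -/
def reduceIter : ℕ → List Sign → List Sign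
  | 0, l => l
  | k + 1, l =>
    match cancelOne l with
    | none => l
    | some l' => reduceIter k l'

/-- The reduced signature: cancel `- 0* +` patterns until none remains
(`l.length` iterations always suffice). -/
def reduceSig (l : List Sign) : List Sign := reduceIter l.length l

/-- The `i`-signature symbol of `α ∈ ℤ^{m|n}` at position `j` (0-indexed;
positions `j < m` are left of the separator). -/
def signOf (m n : ℕ) (i : ℤ) (α : Fin (m + n) → ℤ) (j : Fin (m + n)) : Sign :=
  if (j : ℕ) < m then
    if α j = i then Sign.plus else if α j = i + 1 then Sign.minus else Sign.zero
  else
    if α j = i + 1 then Sign.plus else if α j = i then Sign.minus else Sign.zero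

/-- The `i`-signature of `α` as a list of length `m + n`. -/
def sigList (m n : ℕ) (i : ℤ) (α : Fin (m + n) → ℤ) : List Sign :=
  List.ofFn (signOf m n i α)

/-- The reduced `i`-signature of `α`. -/
def redSig (m n : ℕ) (i : ℤ) (α : Fin (m + n) → ℤ) : List Sign :=
  reduceSig (sigList m n i α)

/-- `ε_i(α)`: the number of `-` in the reduced `i`-signature. -/
def epsilonNum (m n : ℕ) (i : ℤ) (α : Fin (m + n) → ℤ) : ℕ :=
  (redSig m n i α).count Sign.minus

/-- `φ_i(α)`: the number of `+` in the reduced `i`-signature. -/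
def phiNum (m n : ℕ) (i : ℤ) (α : Fin (m + n) → ℤ) : ℕ :=
  (redSig m n i α).count Sign.plus

/-- `c_j ∈ ℤ^{m|n}`: `+1` at position `j` if `j` is left of the separator,
`-1` at position `j` otherwise, and `0` elsewhere (0-indexed). -/
def cvec (m n : ℕ) (j : ℕ) : Fin (m + n) → ℤ :=
  fun k => if (k : ℕ) = j then (if j < m then 1 else -1) else 0

/-- The index of the last occurrence of `s` in `l` (junk if `s ∉ l`). -/
def lastIdxOf (s : Sign) (l : List Sign) : ℕ :=
  l.length - 1 - l.reverse.idxOf s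

/-- The crystal operator `ẽ_i`: subtract `c_j` at the position `j` of the
leftmost `-` of the reduced `i`-signature; `none` if there is no `-`. -/
def etilde (m n : ℕ) (i : ℤ) (α : Fin (m + n) → ℤ) : Option (Fin (m + n) → ℤ) :=
  if Sign.minus ∈ redSig m n i α then
    some (fun k => α k - cvec m n ((redSig m n i α).idxOf Sign.minus) k)
  else none

/-- The crystal operator `f̃_i`: add `c_j` at the position `j` of the
rightmost `+` of the reduced `i`-signature; `none` if there is no `+`. -/
def ftilde (m n : ℕ) (i : ℤ) (α : Fin (m + n) → ℤ) : Option (Fin (m + n) → ℤ) :=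
  if Sign.plus ∈ redSig m n i α then
    some (fun k => α k + cvec m n (lastIdxOf Sign.plus (redSig m n i α)) k)
  else none

/-- `α_0(x)`: the number of entries equal to `x` left of the separator. -/
def count0 (m n : ℕ) (α : Fin (m + n) → ℤ) (x : ℤ) : ℕ :=
  (Finset.univ.filter fun j : Fin (m + n) => (j : ℕ) < m ∧ α j = x).card

/-- `α_1(x)`: the number of entries equal to `x` right of the separator. -/
def count1 (m n : ℕ) (α : Fin (m + n) → ℤ) (x : ℤ) : ℕ :=
  (Finset.univ.filter fun j : Fin (m + n) => m ≤ (j : ℕ) ∧ α j = x).card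

/-- `α ∈ ℤ^{m|n}` is antidominant if `a_1 ≤ … ≤ a_m` and `a_{m+1} ≥ … ≥ a_{m+n}`. -/
def Antidominant (m n : ℕ) (α : Fin (m + n) → ℤ) : Prop :=
  (∀ j k : Fin (m + n), (j : ℕ) ≤ (k : ℕ) → (k : ℕ) < m → α j ≤ α k) ∧
  (∀ j k : Fin (m + n), m ≤ (j : ℕ) → (j : ℕ) ≤ (k : ℕ) → α k ≤ α j)

/-!
For antidominant `α` the entries left of the separator increase and those right of it decrease,
so the `i`-signature has the shape `0^p +^a -^b 0^q +^c -^d 0^r` with `a = α₀(i)`, `b = α₀(i+1)`,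
`c = α₁(i+1)`, `d = α₁(i)`. Only the middle block `-^b 0^q +^c` cancels, `min b c` times, so
`φ_i(α) = α₀(i) + max(0, α₁(i+1) - α₀(i+1))`. The second summand is determined by the
content-difference function, hence `φ_x(β) ≤ φ_x(γ)` gives `β₀(x) ≤ γ₀(x)` for all `x`. Both sides
sum to `m`, so `β₀ = γ₀`, then `β₁ = γ₁`, and a sorted list is determined by its multiplicities.
-/

open List Sign
open scoped Finset

lemma List.eq_of_pairwise_of_count_le {α : Type*} [DecidableEq α] {r : α → α → Prop}
    [Std.Antisymm r] {l₁ l₂ : List α} (h₁ : l₁.Pairwise r) (h₂ : l₂.Pairwise r)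
    (hcount : ∀ a, l₁.count a ≤ l₂.count a) (hlen : l₂.length ≤ l₁.length) : l₁ = l₂ :=
  ((subperm_ext_iff.2 fun a _ => hcount a).perm_of_length_le hlen).eq_of_pairwise' h₁ h₂

lemma List.count_ofFn {α : Type*} [DecidableEq α] {N : ℕ} (f : Fin N → α) (a : α) :
    (ofFn f).count a = #{j | f j = a} := by
  rw [← Multiset.coe_count, ← Fin.univ_val_map, Multiset.count_map]
  simp only [eq_comm]
  rfl

lemma eq_filter_append_replicate_of_pairwise_le {l : List ℤ} (hl : l.Pairwise (· ≤ ·)) (i : ℤ) :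
    l = l.filter (· < i) ++ replicate (l.count i) i ++ replicate (l.count (i + 1)) (i + 1) ++
      l.filter (i + 1 < ·) := by
  refine Perm.eq_of_pairwise' hl ?_ ?_
  · simp only [pairwise_append, hl.filter, pairwise_replicate, mem_append, mem_filter,
      mem_replicate, decide_eq_true_eq]
    grind
  · rw [perm_iff_count]
    intro y
    have hfilter (p : ℤ → Bool) : count y (l.filter p) = if p y then count y l else 0 := by
      split_ifs with h
      · exact count_filter h
      · exact count_eq_zero.2 (by simp [h])
    simp only [count_append, count_replicate, hfilter, beq_iff_eq, decide_eq_true_eq]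
    split_ifs <;> subst_vars <;> omega

lemma map_eq_replicate_append_of_pairwise_le {β : Type*} {l : List ℤ}
    (hl : l.Pairwise (· ≤ ·)) (i : ℤ) {g : ℤ → β} {z : β}
    (hg : ∀ x, x ≠ i → x ≠ i + 1 → g x = z) :
    ∃ p q, l.map g = replicate p z ++ replicate (l.count i) (g i) ++
      replicate (l.count (i + 1)) (g (i + 1)) ++ replicate q z := by
  refine ⟨(l.filter (· < i)).length, (l.filter (i + 1 < ·)).length, ?_⟩
  conv_lhs => rw [eq_filter_append_replicate_of_pairwise_le hl i]
  simp only [map_append, map_replicate]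
  rw [map_eq_replicate_iff.2, map_eq_replicate_iff.2] <;>
    simp only [mem_filter, decide_eq_true_eq] <;> intro x hx <;> exact hg x (by omega) (by omega)

lemma eatPlus_eq_none {l : List Sign} (h : plus ∉ l) : eatPlus l = none := by
  induction l with
  | nil => rfl
  | cons s l ih =>
    cases s with
    | plus => simp at h
    | minus => rfl
    | zero => simp [eatPlus, ih (by simpa using h)]

lemma eatPlus_replicate_zero_append (q : ℕ) (t : List Sign) :
    eatPlus (replicate q zero ++ t) = (eatPlus t).map (replicate q zero ++ ·) := by
  induction q with
  | zero => simp
  | succ q ih => cases h : eatPlus t <;> simp_all [replicate_succ, eatPlus]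

lemma cancelOne_eq_none {l : List Sign} (h : plus ∉ l) : cancelOne l = none := by
  induction l with
  | nil => rfl
  | cons s l ih =>
    have hl : plus ∉ l := by simp_all
    cases s with
    | plus => simp at h
    | minus => simp [cancelOne, eatPlus_eq_none hl, ih hl]
    | zero => simp [cancelOne, ih hl]

lemma cancelOne_append {l₁ : List Sign} (h : minus ∉ l₁) (l₂ : List Sign) :
    cancelOne (l₁ ++ l₂) = (cancelOne l₂).map (l₁ ++ ·) := by
  induction l₁ with
  | nil => simp
  | cons s l₁ ih =>
    have hl : minus ∉ l₁ := by simp_all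
    cases s with
    | minus => simp at h
    | plus => cases h' : cancelOne l₂ <;> simp_all [cancelOne]
    | zero => cases h' : cancelOne l₂ <;> simp_all [cancelOne]

lemma cancelOne_replicate_minus_append (b : ℕ) {u u' : List Sign} (h : eatPlus u = some u') :
    cancelOne (replicate (b + 1) minus ++ u) = some (replicate b minus ++ zero :: u') := by
  induction b with
  | zero => simp [cancelOne, h]
  | succ b ih =>
    have hne : eatPlus (replicate (b + 1) minus ++ u) = none := rfl
    rw [replicate_succ, cons_append, cancelOne, hne, ih]
    rfl

def signatureShape (p a b q c d r : ℕ) : List Sign :=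
  replicate p zero ++ replicate a plus ++ replicate b minus ++ replicate q zero ++
    replicate c plus ++ replicate d minus ++ replicate r zero

lemma cancelOne_signatureShape_of_eq_zero {p a b q c d r : ℕ} (h : b = 0 ∨ c = 0) :
    cancelOne (signatureShape p a b q c d r) = none := by
  rcases h with rfl | rfl
  · rw [show signatureShape p a 0 q c d r = (replicate p zero ++ replicate a plus ++
        replicate q zero ++ replicate c plus) ++ (replicate d minus ++ replicate r zero) by
          simp [signatureShape],
      cancelOne_append (by simp), cancelOne_eq_none (by simp)]
    rfl
  · rw [show signatureShape p a b q 0 d r = (replicate p zero ++ replicate a plus) ++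
        (replicate b minus ++ replicate q zero ++ replicate d minus ++ replicate r zero) by
          simp [signatureShape],
      cancelOne_append (by simp), cancelOne_eq_none (by simp)]
    rfl

lemma cancelOne_signatureShape_succ_succ (p a b q c d r : ℕ) :
    cancelOne (signatureShape p a (b + 1) q (c + 1) d r) =
      some (signatureShape p a b (q + 2) c d r) := by
  have heat : eatPlus (replicate q zero ++ (replicate (c + 1) plus ++
      (replicate d minus ++ replicate r zero))) = some (replicate q zero ++ zero ::
        (replicate c plus ++ (replicate d minus ++ replicate r zero))) := by
    rw [eatPlus_replicate_zero_append]
    rfl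
  simp only [signatureShape, append_assoc]
  rw [cancelOne_append (by simp), cancelOne_append (by simp),
    cancelOne_replicate_minus_append b heat, replicate_succ, replicate_succ']
  simp

lemma reduceIter_signatureShape {k b c : ℕ} (h : min b c ≤ k) (p a q d r : ℕ) :
    reduceIter k (signatureShape p a b q c d r) =
      signatureShape p a (b - min b c) (q + 2 * min b c) (c - min b c) d r := by
  induction k generalizing b c q with
  | zero =>
    rw [Nat.le_zero.mp h]
    rfl
  | succ k ih =>
    rcases Nat.eq_zero_or_pos (min b c) with h0 | hpos
    · rw [reduceIter, cancelOne_signatureShape_of_eq_zero (by omega), h0]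
      rfl
    · obtain ⟨b, rfl⟩ : ∃ b', b = b' + 1 := ⟨b - 1, by omega⟩
      obtain ⟨c, rfl⟩ : ∃ c', c = c' + 1 := ⟨c - 1, by omega⟩
      rw [reduceIter, cancelOne_signatureShape_succ_succ]
      dsimp only
      rw [ih (by omega)]
      congr 1 <;> omega

lemma reduceSig_signatureShape (p a b q c d r : ℕ) :
    reduceSig (signatureShape p a b q c d r) =
      signatureShape p a (b - min b c) (q + 2 * min b c) (c - min b c) d r :=
  reduceIter_signatureShape (by simp [signatureShape]; omega) p a q d r

lemma count_plus_signatureShape (p a b q c d r : ℕ) :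
    (signatureShape p a b q c d r).count plus = a + c := by
  simp [signatureShape, count_replicate]

def leftPart (m n : ℕ) (α : Fin (m + n) → ℤ) : List ℤ :=
  List.ofFn fun j : Fin m => α (Fin.castAdd n j)

def rightPart (m n : ℕ) (α : Fin (m + n) → ℤ) : List ℤ :=
  List.ofFn fun j : Fin n => α (Fin.natAdd m j)

def leftSign (i x : ℤ) : Sign :=
  if x = i then plus else if x = i + 1 then minus else zero

def rightSign (i x : ℤ) : Sign :=
  if x = i + 1 then plus else if x = i then minus else zero

section Weight

variable {m n : ℕ}

lemma ofFn_eq_leftPart_append_rightPart (α : Fin (m + n) → ℤ) :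
    List.ofFn α = leftPart m n α ++ rightPart m n α :=
  List.ofFn_add

lemma count_leftPart (α : Fin (m + n) → ℤ) (x : ℤ) :
    (leftPart m n α).count x = count0 m n α x := by
  rw [leftPart, List.count_ofFn, count0, Finset.card_filter, Finset.card_filter,
    Fin.sum_univ_add]
  simp

lemma count_rightPart (α : Fin (m + n) → ℤ) (x : ℤ) :
    (rightPart m n α).count x = count1 m n α x := by
  rw [rightPart, List.count_ofFn, count1, Finset.card_filter, Finset.card_filter,
    Fin.sum_univ_add]
  simp

lemma sigList_eq (i : ℤ) (α : Fin (m + n) → ℤ) :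
    sigList m n i α = (leftPart m n α).map (leftSign i) ++ (rightPart m n α).map (rightSign i) := by
  rw [sigList, List.ofFn_add, leftPart, rightPart, List.map_ofFn, List.map_ofFn]
  congr 2 <;> funext j <;> simp [signOf, leftSign, rightSign, Fin.castAdd]

namespace Antidominant

variable {α : Fin (m + n) → ℤ}

lemma pairwise_leftPart (hα : Antidominant m n α) : (leftPart m n α).Pairwise (· ≤ ·) :=
  List.pairwise_ofFn.2 fun _ k hjk => hα.1 _ _ hjk.le k.isLt

lemma pairwise_rightPart (hα : Antidominant m n α) : (rightPart m n α).Pairwise (· ≥ ·) :=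
  List.pairwise_ofFn.2 fun _ _ hjk => hα.2 _ _ (by simp) (by simpa using hjk.le)

lemma sigList_eq_signatureShape (hα : Antidominant m n α) (i : ℤ) :
    ∃ p q r, sigList m n i α = signatureShape p (count0 m n α i) (count0 m n α (i + 1)) q
      (count1 m n α (i + 1)) (count1 m n α i) r := by
  obtain ⟨p, q, hL⟩ := map_eq_replicate_append_of_pairwise_le hα.pairwise_leftPart i
    (g := leftSign i) (z := zero) (by intro x h₁ h₂; simp [leftSign, h₁, h₂])
  obtain ⟨r, q', hR⟩ := map_eq_replicate_append_of_pairwise_le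
    (pairwise_reverse.2 hα.pairwise_rightPart) i
    (g := rightSign i) (z := zero) (by intro x h₁ h₂; simp [rightSign, h₁, h₂])
  refine ⟨p, q + q', r, ?_⟩
  rw [sigList_eq, ← reverse_reverse (rightPart m n α), map_reverse, hR]
  simp [hL, leftSign, rightSign, signatureShape, count_leftPart, count_rightPart,
    ← replicate_append_replicate]

lemma phiNum_eq (hα : Antidominant m n α) (i : ℤ) :
    phiNum m n i α = count0 m n α i +
      (count1 m n α (i + 1) - min (count0 m n α (i + 1)) (count1 m n α (i + 1))) := by
  obtain ⟨p, q, r, h⟩ := sigList_eq_signatureShape hα i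
  rw [phiNum, redSig, h, reduceSig_signatureShape, count_plus_signatureShape]

end Antidominant

end Weight

theorem antidominant_eq_of_epsilon_phi_le_general
    (m n : ℕ) (β γ : Fin (m + n) → ℤ)
    (hβ : Antidominant m n β) (hγ : Antidominant m n γ)
    (hd : ∀ y : ℤ, (count0 m n β y : ℤ) - (count1 m n β y : ℤ) =
      (count0 m n γ y : ℤ) - (count1 m n γ y : ℤ))
    (hφ : ∀ x : ℤ, phiNum m n x β ≤ phiNum m n x γ) :
    γ = β := by
  have hcount0_le (x : ℤ) : count0 m n β x ≤ count0 m n γ x := by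
    have h := hφ x
    rw [hβ.phiNum_eq, hγ.phiNum_eq] at h
    have := hd (x + 1)
    omega
  have hleft : leftPart m n β = leftPart m n γ :=
    eq_of_pairwise_of_count_le hβ.pairwise_leftPart hγ.pairwise_leftPart
      (by simpa only [count_leftPart] using hcount0_le) (by simp [leftPart])
  have hcount0 (x : ℤ) : count0 m n β x = count0 m n γ x := by
    rw [← count_leftPart, ← count_leftPart, hleft]
  have hright : rightPart m n β = rightPart m n γ :=
    eq_of_pairwise_of_count_le hβ.pairwise_rightPart hγ.pairwise_rightPart
      (fun x => by have := hd x; have := hcount0 x; rw [count_rightPart, count_rightPart]; omega)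
      (by simp [rightPart])
  apply List.ofFn_injective
  rw [ofFn_eq_leftPart_append_rightPart, ofFn_eq_leftPart_append_rightPart, hleft, hright]

/-- If `β, γ ∈ ℤ^{m|n}` are antidominant with the same
content-difference function, and `φ_x(γ) ≥ φ_x(β)` and `ε_x(γ) ≥ ε_x(β)`
for all `x ∈ ℤ`, then `γ = β`. -/
theorem antidominant_eq_of_epsilon_phi_le
    (m n : ℕ) (hm : 1 ≤ m) (hn : 1 ≤ n) (β γ : Fin (m + n) → ℤ)
    (hβ : Antidominant m n β) (hγ : Antidominant m n γ)
    (hd : ∀ y : ℤ, (count0 m n β y : ℤ) - (count1 m n β y : ℤ) =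
      (count0 m n γ y : ℤ) - (count1 m n γ y : ℤ))
    (hφ : ∀ x : ℤ, phiNum m n x β ≤ phiNum m n x γ)
    (hε : ∀ x : ℤ, epsilonNum m n x β ≤ epsilonNum m n x γ) :
    γ = β :=
  antidominant_eq_of_epsilon_phi_le_general m n β γ hβ hγ hd hφ
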